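/- arXiv:2303.10072 — 2 statements merged into one kernel-verified Lean document; each statement's English description precedes it below -/
import Mathlib

section
/- Assume h > 0, n ≥ 1, and λ_0, …, λ_{n−1} are real numbers with λ_j ≠ −1/h for all j, such that |e_λ(nh)| > 1. Then K_0(λ) is the minimum Hyers–Ulam stability constant for Δ_h x(k) − λ(k)x(k) = 0: if K > 0 is any constant such that for every ε > 0 and every ψ : ℕ → ℝ satisfying |Δ_h ψ(k) − λ(k)ψ(k)| ≤ ε for all k ∈ ℕ there exists a solution x : ℕ → ℝ of Δ_h x(k) − λ(k)x(k) = 0 with |ψ(k) − x(k)| ≤ K·ε for all k ∈ ℕ, then K ≥ K_0(λ). -/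
/-- The forward `h`-difference operator on sequences. -/
noncomputable def hDiff (h : ℝ) (x : ℕ → ℝ) (k : ℕ) : ℝ := (x (k + 1) - x k) / h

/-- The discrete exponential over one period: `∏_{k=0}^{n-1} (1 + h c_k)`. -/
noncomputable def eExp (h : ℝ) (n : ℕ) (c : ℕ → ℝ) : ℝ :=
  ∏ k ∈ Finset.range n, (1 + h * c k)

/-- `S_k = Σ_{j=1}^{n} ∏_{i=0}^{j-1} 1/|1 + h c_{(k+i) mod n}|`. -/
noncomputable def Ssum (h : ℝ) (n : ℕ) (c : ℕ → ℝ) (k : ℕ) : ℝ :=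
  ∑ j ∈ Finset.range n, ∏ i ∈ Finset.range (j + 1), 1 / |1 + h * c ((k + i) % n)|

/-- The Hyers–Ulam constant `K₀ = (h|e|/|1-|e||) · max{S_0,…,S_{n-1}}`. -/
noncomputable def K0 (h : ℝ) (n : ℕ) (c : ℕ → ℝ) : ℝ :=
  (h * abs (eExp h n c) / abs (1 - abs (eExp h n c))) * ⨆ k : Fin n, Ssum h n c (k : ℕ)

/-- The `n`-cycle coefficient `λ(k) = c (k mod n)`. -/
def cyc (n : ℕ) (c : ℕ → ℝ) (k : ℕ) : ℝ := c (k % n)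

/-- Auxiliary: the coefficient `a k = 1 + h λ(k)`. -/
noncomputable def aa (h : ℝ) (n : ℕ) (c : ℕ → ℝ) (k : ℕ) : ℝ := 1 + h * c (k % n)

/-- Auxiliary: the fundamental solution `P k = ∏_{i<k} a i`. -/
noncomputable def PP (h : ℝ) (n : ℕ) (c : ℕ → ℝ) (k : ℕ) : ℝ :=
  ∏ i ∈ Finset.range k, aa h n c i

/-- Auxiliary: tail weight. -/
noncomputable def TT (h : ℝ) (n : ℕ) (c : ℕ → ℝ) (k : ℕ) : ℝ :=
  (|eExp h n c| / (|eExp h n c| - 1)) *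
    ∑ r ∈ Finset.range n, 1 / |PP h n c (k + r + 1)|

/-- Auxiliary: worst-case approximate solution. -/
noncomputable def psi (h : ℝ) (n : ℕ) (c : ℕ → ℝ) (k : ℕ) : ℝ :=
  -(h * PP h n c k * TT h n c k)

theorem stmt_1 (h : ℝ) (hh : 0 < h) (n : ℕ) (hn : 1 ≤ n) (c : ℕ → ℝ)
    (hc : ∀ j, j < n → c j ≠ -1 / h)
    (he : 1 < |eExp h n c|) :
    ∀ K : ℝ, 0 < K →
      (∀ ε : ℝ, 0 < ε → ∀ ψ : ℕ → ℝ,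
        (∀ k, |hDiff h ψ k - cyc n c k * ψ k| ≤ ε) →
        ∃ x : ℕ → ℝ, (∀ k, hDiff h x k - cyc n c k * x k = 0) ∧
          ∀ k, |ψ k - x k| ≤ K * ε) →
      K0 h n c ≤ K := by
  intro K hK hyp
  set e := eExp h n c with hedef
  set E := |e| with hEdef
  have hE1 : 1 < E := he
  have hEpos : 0 < E := by linarith
  have hEne : E ≠ 0 := hEpos.ne'
  have hE1ne : E - 1 ≠ 0 := by linarith
  have hhne : h ≠ 0 := hh.ne'
  set a : ℕ → ℝ := aa h n c with hadef
  have haval : ∀ k, a k = 1 + h * c (k % n) := fun k => rfl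
  have ha0 : ∀ k, a k ≠ 0 := by
    intro k hk0
    have hcm := hc (k % n) (Nat.mod_lt k (by omega))
    apply hcm
    rw [haval] at hk0
    field_simp
    linarith
  set P : ℕ → ℝ := PP h n c with hPdef
  have hPval : ∀ k, P k = ∏ i ∈ Finset.range k, a i := fun k => rfl
  have hP0 : ∀ k, P k ≠ 0 := by
    intro k
    rw [hPval]
    exact Finset.prod_ne_zero_iff.2 (fun i _ => ha0 i)
  have hPabs : ∀ k, 0 < |P k| := fun k => abs_pos.2 (hP0 k)
  have hPsucc : ∀ k, P (k + 1) = P k * a k := by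
    intro k; rw [hPval, hPval, Finset.prod_range_succ]
  have haper : ∀ k, a (k + n) = a k := by
    intro k; rw [haval, haval, Nat.add_mod_right]
  have hprodn : ∀ k, ∏ i ∈ Finset.range n, a (k + i) = e := by
    intro k
    induction k with
    | zero =>
      simp only [Nat.zero_add, hedef]
      unfold eExp
      refine Finset.prod_congr rfl (fun i hi => ?_)
      rw [haval, Nat.mod_eq_of_lt (Finset.mem_range.1 hi)]
    | succ k ih =>
      have h3 : ∀ i, k + (i + 1) = (k + 1) + i := fun i => by omega
      have h1 : (∏ i ∈ Finset.range n, a ((k + 1) + i)) * a k =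
          ∏ i ∈ Finset.range (n + 1), a (k + i) := by
        rw [Finset.prod_range_succ' (fun i => a (k + i)) n, Nat.add_zero]
        congr 1
        exact Finset.prod_congr rfl (fun i _ => by rw [← h3 i])
      have h2 : ∏ i ∈ Finset.range (n + 1), a (k + i) =
          (∏ i ∈ Finset.range n, a (k + i)) * a k := by
        rw [Finset.prod_range_succ (fun i => a (k + i)) n, haper k]
      have h4 := h1.trans h2
      have h5 := mul_right_cancel₀ (ha0 k) h4
      rw [h5, ih]
  have hPn : ∀ k, P (k + n) = P k * e := by
    intro k
    rw [hPval, hPval, Finset.prod_range_add, hprodn k]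
  have hPna : ∀ k, |P (k + n)| = |P k| * E := by
    intro k; rw [hPn, abs_mul, hEdef]
  set T : ℕ → ℝ := TT h n c with hTdef
  have hTval : ∀ k, T k = (E / (E - 1)) * ∑ r ∈ Finset.range n, 1 / |P (k + r + 1)| :=
    fun k => rfl
  have hTnonneg : ∀ k, 0 ≤ T k := by
    intro k
    rw [hTval]
    apply mul_nonneg (div_nonneg hEpos.le (by linarith))
    exact Finset.sum_nonneg (fun r _ => by positivity)
  have hTstep : ∀ k, T k - T (k + 1) = 1 / |P (k + 1)| := by
    intro k
    have hshift : ∑ r ∈ Finset.range n, 1 / |P (k + 1 + r + 1)| =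
        (∑ r ∈ Finset.range n, 1 / |P (k + r + 1)|) + 1 / |P (k + n + 1)| -
          1 / |P (k + 0 + 1)| := by
      have e1 : ∑ r ∈ Finset.range (n + 1), 1 / |P (k + r + 1)| =
          (∑ r ∈ Finset.range n, 1 / |P (k + (r + 1) + 1)|) + 1 / |P (k + 0 + 1)| :=
        Finset.sum_range_succ' (fun r => 1 / |P (k + r + 1)|) n
      have e2 : ∑ r ∈ Finset.range (n + 1), 1 / |P (k + r + 1)| =
          (∑ r ∈ Finset.range n, 1 / |P (k + r + 1)|) + 1 / |P (k + n + 1)| :=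
        Finset.sum_range_succ (fun r => 1 / |P (k + r + 1)|) n
      have h3 : ∀ r, k + (r + 1) + 1 = k + 1 + r + 1 := fun r => by omega
      simp only [h3] at e1
      linarith [e1, e2]
    have hpn1 : |P (k + n + 1)| = |P (k + 1)| * E := by
      rw [show k + n + 1 = (k + 1) + n by omega, hPna]
    rw [hTval, hTval, hshift, hpn1]
    have hp1 : |P (k + 1)| ≠ 0 := (hPabs (k + 1)).ne'
    rw [show k + 0 + 1 = k + 1 by omega]
    field_simp
    ring
  set ψ : ℕ → ℝ := psi h n c with hψdef
  have hψval : ∀ k, ψ k = -(h * P k * T k) := fun k => rfl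
  have hψres : ∀ k, |hDiff h ψ k - cyc n c k * ψ k| ≤ 1 := by
    intro k
    have key : hDiff h ψ k - cyc n c k * ψ k = P (k + 1) / |P (k + 1)| := by
      have hstep : ψ (k + 1) - a k * ψ k = h * (P (k + 1) * (T k - T (k + 1))) := by
        rw [hψval, hψval, hPsucc k]; ring
      have : hDiff h ψ k - cyc n c k * ψ k = (ψ (k + 1) - a k * ψ k) / h := by
        unfold hDiff cyc
        rw [haval]
        field_simp
        ring
      rw [this, hstep, hTstep k, mul_comm, mul_div_assoc, div_self hh.ne', mul_one,
        mul_one_div]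
    rw [key, abs_div, abs_abs, div_self (hPabs (k + 1)).ne']
  obtain ⟨x, hx, hxd⟩ := hyp 1 one_pos ψ hψres
  have hxs : ∀ k, x (k + 1) = a k * x k := by
    intro k
    have h0 := hx k
    unfold hDiff cyc at h0
    have h1 : (x (k + 1) - x k) / h = c (k % n) * x k := by linarith
    have h2 : x (k + 1) - x k = c (k % n) * x k * h := (div_eq_iff hh.ne').1 h1
    rw [haval]
    linear_combination h2
  have hxP : ∀ k, x k = x 0 * P k := by
    intro k
    induction k with
    | zero => rw [hPval]; simp
    | succ k ih => rw [hxs k, ih, hPsucc]; ring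
  by_cases hx0 : x 0 = 0
  · -- the shadowing solution is 0; |ψ k| ≤ K gives the bound
    have hψK : ∀ k, |ψ k| ≤ K := by
      intro k
      have := hxd k
      rw [hxP k, hx0, zero_mul, sub_zero, mul_one] at this
      exact this
    have hψvalS : ∀ k, (h * E / (E - 1)) * Ssum h n c k = |ψ k| := by
      intro k
      have hterm : ∀ r, |P k| * (1 / |P (k + r + 1)|) =
          ∏ i ∈ Finset.range (r + 1), 1 / |1 + h * c ((k + i) % n)| := by
        intro r
        have hp : P (k + (r + 1)) = P k * ∏ i ∈ Finset.range (r + 1), a (k + i) := by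
          rw [hPval, hPval, Finset.prod_range_add]
        have habs : |P (k + r + 1)| = |P k| * ∏ i ∈ Finset.range (r + 1), |a (k + i)| := by
          rw [show k + r + 1 = k + (r + 1) by omega, hp, abs_mul, Finset.abs_prod]
        rw [habs]
        have hprodpos : (0:ℝ) < ∏ i ∈ Finset.range (r + 1), |a (k + i)| :=
          Finset.prod_pos (fun i _ => abs_pos.2 (ha0 (k + i)))
        rw [eq_comm]
        calc ∏ i ∈ Finset.range (r + 1), 1 / |1 + h * c ((k + i) % n)|
            = ∏ i ∈ Finset.range (r + 1), 1 / |a (k + i)| := by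
              refine Finset.prod_congr rfl (fun i _ => ?_); rw [haval]
          _ = 1 / ∏ i ∈ Finset.range (r + 1), |a (k + i)| := by
              rw [one_div, ← Finset.prod_inv_distrib]
              exact Finset.prod_congr rfl (fun i _ => (one_div _))
          _ = |P k| * (1 / (|P k| * ∏ i ∈ Finset.range (r + 1), |a (k + i)|)) := by
              have hQ : (∏ i ∈ Finset.range (r + 1), |a (k + i)|) ≠ 0 := hprodpos.ne'
              have hPk : |P k| ≠ 0 := (hPabs k).ne'
              field_simp
        -- done
      have : |ψ k| = h * (|P k| * T k) := by
        rw [hψval, abs_neg, abs_mul, abs_mul, abs_of_pos hh,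
          abs_of_nonneg (hTnonneg k), mul_assoc]
      rw [this, hTval]
      have hsum : |P k| * ((E / (E - 1)) * ∑ r ∈ Finset.range n, 1 / |P (k + r + 1)|) =
          (E / (E - 1)) * ∑ r ∈ Finset.range n, |P k| * (1 / |P (k + r + 1)|) := by
        rw [mul_left_comm, Finset.mul_sum]
      rw [hsum]
      have : ∑ r ∈ Finset.range n, |P k| * (1 / |P (k + r + 1)|) = Ssum h n c k := by
        unfold Ssum
        exact Finset.sum_congr rfl (fun r _ => hterm r)
      rw [this]; ring
    have habs1E : |1 - E| = E - 1 := by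
      rw [abs_of_neg (by linarith : (1:ℝ) - E < 0)]; ring
    have hC : (0:ℝ) < h * E / (E - 1) := div_pos (mul_pos hh hEpos) (by linarith)
    haveI : Nonempty (Fin n) := ⟨⟨0, hn⟩⟩
    have hsup : (⨆ k : Fin n, Ssum h n c (k : ℕ)) ≤ K / (h * E / (E - 1)) := by
      refine ciSup_le (fun k => ?_)
      rw [le_div_iff₀ hC, mul_comm]
      rw [hψvalS (k : ℕ)]
      exact hψK _
    unfold K0
    rw [← hedef, ← hEdef, habs1E]
    calc h * E / (E - 1) * ⨆ k : Fin n, Ssum h n c (k : ℕ)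
        ≤ h * E / (E - 1) * (K / (h * E / (E - 1))) :=
          mul_le_mul_of_nonneg_left hsup hC.le
      _ = K := by
          rw [mul_comm]
          exact div_mul_cancel₀ K hC.ne'
  · -- nonzero solutions blow up, contradiction
    exfalso
    have hTa : ∀ k, T (k + n) = T k / E := by
      intro k
      rw [hTval, hTval]
      have : ∀ r ∈ Finset.range n, 1 / |P (k + n + r + 1)| =
          (1 / E) * (1 / |P (k + r + 1)|) := by
        intro r _
        rw [show k + n + r + 1 = (k + r + 1) + n by omega, hPna]
        rw [one_div, one_div, one_div, mul_inv]
        ring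
      rw [Finset.sum_congr rfl this, ← Finset.mul_sum]
      field_simp
    have hPT : ∀ m, |P (m * n)| * T (m * n) = T 0 := by
      intro m
      induction m with
      | zero => simp [hPval]
      | succ m ih =>
        rw [show (m + 1) * n = m * n + n by ring, hPna, hTa]
        rw [show |P (m * n)| * E * (T (m * n) / E) = |P (m * n)| * T (m * n) by
          field_simp]
        exact ih
    have hψm : ∀ m, |ψ (m * n)| = h * T 0 := by
      intro m
      rw [hψval, abs_neg, abs_mul, abs_mul, abs_of_pos hh,
        abs_of_nonneg (hTnonneg _), mul_assoc, hPT]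
    have hPE : ∀ m, |P (m * n)| = E ^ m := by
      intro m
      induction m with
      | zero => simp [hPval]
      | succ m ih =>
        rw [show (m + 1) * n = m * n + n by ring, hPna, ih, pow_succ]
    have hxm : ∀ m, |x (m * n)| = |x 0| * E ^ m := by
      intro m
      rw [hxP, abs_mul, hPE]
    obtain ⟨m, hm⟩ := pow_unbounded_of_one_lt ((K + h * T 0) / |x 0|) hE1
    have hx0pos : (0:ℝ) < |x 0| := abs_pos.2 hx0
    have hgt : K + h * T 0 < |x 0| * E ^ m := by
      rw [div_lt_iff₀ hx0pos] at hm
      linarith [hm]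
    have hd := hxd (m * n)
    rw [mul_one] at hd
    have htri : |x (m * n)| - |ψ (m * n)| ≤ |ψ (m * n) - x (m * n)| := by
      rw [abs_sub_comm]
      exact abs_sub_abs_le_abs_sub _ _
    rw [hxm, hψm] at htri
    linarith
end

section
/- Assume h > 0, n ≥ 1, and λ_0, …, λ_{n−1} are real numbers with λ_j ≠ 1/h and λ_j ≠ −1/h for all j, such that 0 < |e_λ(nh)| ≠ 1 and 0 < |e_{−λ}(nh)| ≠ 1. Then the discrete Hill-type equation Δ²_h y(k) + [Δ_h λ(k) − λ(k)λ(k+1)]·y(k) = 0 is Hyers–Ulam stable on ℕ with Hyers–Ulam stability constant K = K_0(λ)·K_0(−λ): for every ε > 0 and every ξ : ℕ → ℝ satisfying |Δ²_h ξ(k) + [Δ_h λ(k) − λ(k)λ(k+1)]·ξ(k)| ≤ ε for all k ∈ ℕ, there exists y : ℕ → ℝ solving the equation for all k ∈ ℕ with |ξ(k) − y(k)| ≤ K_0(λ)·K_0(−λ)·ε for all k ∈ ℕ. -/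
open Finset

private lemma prod_rot (n : ℕ) (hn : 1 ≤ n) (f : ℕ → ℝ)
    (hf : ∀ j, j < n → f j ≠ 0) (m : ℕ) :
    ∏ i ∈ range n, f ((m + i) % n) = ∏ j ∈ range n, f j := by
  induction m with
  | zero =>
    refine prod_congr rfl fun i hi => ?_
    rw [Nat.zero_add, Nat.mod_eq_of_lt (mem_range.mp hi)]
  | succ m ih =>
    rw [← ih]
    have h1 : ∀ i, f ((m + 1 + i) % n) = f ((m + (i + 1)) % n) := by
      intro i; rw [show m + 1 + i = m + (i + 1) from by omega]
    have key : (∏ i ∈ range n, f ((m + (i + 1)) % n)) * f ((m + 0) % n)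
        = f ((m + n) % n) * ∏ i ∈ range n, f ((m + i) % n) := by
      rw [← prod_range_succ' (fun i => f ((m + i) % n)) n, prod_range_succ]
      ring
    have h2 : f ((m + n) % n) = f ((m + 0) % n) := by
      congr 1; simp [Nat.add_mod_right]
    have h3 : f ((m + 0) % n) ≠ 0 := hf _ (Nat.mod_lt _ (by omega))
    calc ∏ i ∈ range n, f ((m + 1 + i) % n)
        = ∏ i ∈ range n, f ((m + (i + 1)) % n) := prod_congr rfl fun i _ => h1 i
      _ = ∏ i ∈ range n, f ((m + i) % n) := by
          rw [h2] at key
          exact mul_right_cancel₀ h3 (by rw [key, mul_comm])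

private lemma Ssum_nonneg (h : ℝ) (n : ℕ) (a : ℕ → ℝ) (k : ℕ) : 0 ≤ Ssum h n a k := by
  apply Finset.sum_nonneg; intro j _
  exact Finset.prod_nonneg fun i _ => by positivity

private lemma Ssum_mod (h : ℝ) (n : ℕ) (a : ℕ → ℝ) (k : ℕ) :
    Ssum h n a (k % n) = Ssum h n a k := by
  unfold Ssum
  refine sum_congr rfl fun j _ => prod_congr rfl fun i _ => ?_
  rw [Nat.mod_add_mod]

private lemma Ssum_rec (h : ℝ) (n : ℕ) (hn : 1 ≤ n) (a : ℕ → ℝ)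
    (ha : ∀ j, j < n → 1 + h * a j ≠ 0) (k : ℕ) :
    Ssum h n a (k + 1) =
      |1 + h * a (k % n)| * Ssum h n a k + 1 / |eExp h n a| - 1 := by
  have habs : ∀ j, j < n → |1 + h * a j| ≠ 0 := fun j hj => abs_ne_zero.mpr (ha j hj)
  set g : ℕ → ℝ := fun i => 1 / |1 + h * a ((k + i) % n)| with hg
  have hg0 : |1 + h * a (k % n)| * g 0 = 1 := by
    simp only [hg, Nat.add_zero]
    rw [mul_one_div, div_self (habs _ (Nat.mod_lt _ (by omega)))]
  -- |p k| * Ssum k = ∑_{j ∈ range n} ∏_{i ∈ range j} g (i+1)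
  have step1 : |1 + h * a (k % n)| * Ssum h n a k
      = ∑ j ∈ range n, ∏ i ∈ range j, g (i + 1) := by
    have hS : Ssum h n a k = ∑ j ∈ range n, ∏ i ∈ range (j + 1), g i := rfl
    rw [hS, mul_sum]
    refine sum_congr rfl fun j _ => ?_
    rw [prod_range_succ' g j, ← mul_assoc, mul_comm (|1 + h * a (k % n)|) _, mul_assoc,
      hg0, mul_one]
  -- Ssum (k+1) = ∑_{j ∈ range n} ∏_{i ∈ range (j+1)} g (i+1)
  have step2 : Ssum h n a (k + 1) = ∑ j ∈ range n, ∏ i ∈ range (j + 1), g (i + 1) := by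
    unfold Ssum
    refine sum_congr rfl fun j _ => prod_congr rfl fun i _ => ?_
    simp only [hg]
    rw [show k + 1 + i = k + (i + 1) from by omega]
  -- full period product of g (·+1) equals 1 / |eExp|
  have step3 : ∏ i ∈ range n, g (i + 1) = 1 / |eExp h n a| := by
    have := prod_rot n hn (fun j => 1 / |1 + h * a j|)
      (fun j hj => by simpa using habs j hj) (k + 1)
    have e1 : ∏ i ∈ range n, g (i + 1) = ∏ i ∈ range n, 1 / |1 + h * a ((k + 1 + i) % n)| := by
      refine prod_congr rfl fun i _ => ?_
      simp only [hg]
      rw [show k + (i + 1) = k + 1 + i from by omega]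
    rw [e1, this]
    rw [eExp, abs_prod]
    simp [one_div]
  -- sum manipulation
  have step4 : (∑ j ∈ range n, ∏ i ∈ range j, g (i + 1))
      = 1 + (∑ j ∈ range n, ∏ i ∈ range (j + 1), g (i + 1)) - ∏ i ∈ range n, g (i + 1) := by
    have e1 : ∑ j ∈ range (n + 1), ∏ i ∈ range j, g (i + 1)
        = (∑ j ∈ range n, ∏ i ∈ range j, g (i + 1)) + ∏ i ∈ range n, g (i + 1) :=
      sum_range_succ _ n
    have e2 : ∑ j ∈ range (n + 1), ∏ i ∈ range j, g (i + 1)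
        = (∑ j ∈ range n, ∏ i ∈ range (j + 1), g (i + 1)) + ∏ i ∈ range 0, g (i + 1) :=
      sum_range_succ' _ n
    simp only [range_zero, prod_empty] at e2
    linarith [e1, e2.symm]
  linarith [step1, step2, step3, step4]

set_option maxHeartbeats 1000000 in
private lemma FO (h : ℝ) (hh : 0 < h) (n : ℕ) (hn : 1 ≤ n) (a : ℕ → ℝ)
    (ha : ∀ j, j < n → 1 + h * a j ≠ 0)
    (he0 : 0 < |eExp h n a|) (he1 : |eExp h n a| ≠ 1)
    (f : ℕ → ℝ) (ε : ℝ) (hε : 0 ≤ ε) (ξ : ℕ → ℝ)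
    (hξ : ∀ k, |hDiff h ξ k - cyc n a k * ξ k - f k| ≤ ε) :
    ∃ y : ℕ → ℝ, (∀ k, hDiff h y k - cyc n a k * y k = f k) ∧
      ∀ k, |ξ k - y k| ≤ h * |eExp h n a| / abs (1 - |eExp h n a|) * Ssum h n a k * ε := by
  have hne : h ≠ 0 := ne_of_gt hh
  set P := eExp h n a with hPdef
  set p : ℕ → ℝ := fun k => 1 + h * a (k % n) with hpdef
  have hp : ∀ k, p k ≠ 0 := fun k => ha _ (Nat.mod_lt _ (by omega))
  have hppos : ∀ k, 0 < |p k| := fun k => abs_pos.mpr (hp k)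
  set r : ℕ → ℝ := fun k => hDiff h ξ k - cyc n a k * ξ k - f k with hrdef
  have hr : ∀ k, |r k| ≤ ε := hξ
  have hrec : ∀ k, ξ (k + 1) = p k * ξ k + h * (f k + r k) := by
    intro k
    have e1 : r k = (ξ (k + 1) - ξ k) / h - a (k % n) * ξ k - f k := rfl
    simp only [hpdef]
    rw [e1]
    field_simp
    ring
  -- the general solution with initial value A
  set ygen : ℝ → ℕ → ℝ :=
    fun A k => Nat.rec (motive := fun _ => ℝ) A (fun k yk => p k * yk + h * f k) k
    with hygen
  have hy0 : ∀ A, ygen A 0 = A := fun A => rfl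
  have hyrec : ∀ A k, ygen A (k + 1) = p k * ygen A k + h * f k := fun A k => rfl
  have hysol : ∀ A k, hDiff h (ygen A) k - cyc n a k * ygen A k = f k := by
    intro A k
    show (ygen A (k + 1) - ygen A k) / h - a (k % n) * ygen A k = f k
    rw [hyrec A k]
    simp only [hpdef]
    field_simp
    ring
  have hdrec : ∀ A k, ξ (k + 1) - ygen A (k + 1) = p k * (ξ k - ygen A k) + h * r k := by
    intro A k
    rw [hrec k, hyrec A k]; ring
  rcases lt_or_gt_of_ne he1 with hlt | hgt
  · -- |P| < 1
    have hOne : (0:ℝ) < 1 - |P| := by linarith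
    set F : ℕ → ℝ := fun k => |P| * Ssum h n a k / (1 - |P|) with hFdef
    have hF0 : ∀ k, 0 ≤ F k := by
      intro k
      have := Ssum_nonneg h n a k
      simp only [hFdef]
      positivity
    have hFrec : ∀ k, F (k + 1) = |p k| * F k + 1 := by
      intro k
      have hs := Ssum_rec h n hn a ha k
      simp only [hFdef, hpdef, ← hPdef]
      rw [hs, ← hPdef]
      have hP0 : |P| ≠ 0 := ne_of_gt he0
      field_simp
      ring
    refine ⟨ygen (ξ 0), hysol (ξ 0), ?_⟩
    have hbd : ∀ k, |ξ k - ygen (ξ 0) k| ≤ h * ε * F k := by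
      intro k
      induction k with
      | zero =>
        rw [hy0, sub_self, abs_zero]
        have := hF0 0
        positivity
      | succ k ih =>
        calc |ξ (k + 1) - ygen (ξ 0) (k + 1)|
            = |p k * (ξ k - ygen (ξ 0) k) + h * r k| := by rw [hdrec (ξ 0) k]
          _ ≤ |p k * (ξ k - ygen (ξ 0) k)| + |h * r k| := abs_add_le _ _
          _ = |p k| * |ξ k - ygen (ξ 0) k| + h * |r k| := by
              rw [abs_mul, abs_mul, abs_of_pos hh]
          _ ≤ |p k| * (h * ε * F k) + h * ε :=
              add_le_add (mul_le_mul_of_nonneg_left ih (abs_nonneg _))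
                (mul_le_mul_of_nonneg_left (hr k) hh.le)
          _ = h * ε * F (k + 1) := by rw [hFrec k]; ring
    intro k
    refine (hbd k).trans (le_of_eq ?_)
    rw [abs_of_pos hOne]
    simp only [hFdef]
    ring
  · -- |P| > 1
    have hOne : (0:ℝ) < |P| - 1 := by linarith
    set T : ℕ → ℝ := fun k => |P| * Ssum h n a k / (|P| - 1) with hTdef
    have hT0 : ∀ k, 0 ≤ T k := by
      intro k
      have := Ssum_nonneg h n a k
      simp only [hTdef]
      positivity
    have hTrec : ∀ k, |p k| * T k = 1 + T (k + 1) := by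
      intro k
      have hs := Ssum_rec h n hn a ha k
      simp only [hTdef, hpdef, ← hPdef]
      rw [hs, ← hPdef]
      have hP0 : |P| ≠ 0 := ne_of_gt he0
      field_simp
      ring
    set q : ℕ → ℝ := fun m => 1 / |p m| with hqdef
    have hq0 : ∀ m, 0 ≤ q m := by
      intro m; simp only [hqdef]; positivity
    set Hf : ℕ → ℕ → ℝ := fun k N => ∑ i ∈ range N, ∏ t ∈ range (i + 1), q (k + t)
      with hHfdef
    have HfRec : ∀ k N, Hf k (N + 1) = q k * (1 + Hf (k + 1) N) := by
      intro k N
      simp only [hHfdef]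
      calc ∑ i ∈ range (N + 1), ∏ t ∈ range (i + 1), q (k + t)
          = ∑ i ∈ range (N + 1), (∏ t ∈ range i, q (k + (t + 1))) * q (k + 0) :=
            sum_congr rfl fun i _ => prod_range_succ' (fun t => q (k + t)) i
        _ = q k * ∑ i ∈ range (N + 1), ∏ t ∈ range i, q (k + 1 + t) := by
            rw [mul_sum]
            refine sum_congr rfl fun i _ => ?_
            rw [Nat.add_zero, mul_comm]
            congr 1
            exact prod_congr rfl fun t _ => by rw [show k + (t + 1) = k + 1 + t from by omega]
        _ = q k * (1 + ∑ i ∈ range N, ∏ t ∈ range (i + 1), q (k + 1 + t)) := by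
            rw [sum_range_succ' (fun i => ∏ t ∈ range i, q (k + 1 + t)) N]
            simp [add_comm]
    have Hle : ∀ N k, Hf k N ≤ T k := by
      intro N
      induction N with
      | zero => intro k; simp only [hHfdef, range_zero, sum_empty]; exact hT0 k
      | succ N ih =>
        intro k
        rw [HfRec k N]
        have e1 : q k * (1 + Hf (k + 1) N) ≤ q k * (1 + T (k + 1)) :=
          mul_le_mul_of_nonneg_left (by linarith [ih (k + 1)]) (hq0 k)
        have e2 : q k * (1 + T (k + 1)) = T k := by
          rw [← hTrec k]
          simp only [hqdef]
          rw [one_div, inv_mul_eq_div]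
          exact mul_div_cancel_left₀ _ (ne_of_gt (hppos k))
        linarith
    set E : ℕ → ℝ := fun k => ∏ i ∈ range k, p i with hEdef
    have hE : ∀ k, E k ≠ 0 := by
      intro k
      simp only [hEdef]
      exact Finset.prod_ne_zero_iff.mpr fun i _ => hp i
    have hEpos : ∀ k, 0 < |E k| := fun k => abs_pos.mpr (hE k)
    have hEsucc : ∀ k, E (k + 1) = E k * p k := fun k => prod_range_succ _ k
    have hEinv : ∀ m, ∏ t ∈ range m, q t = 1 / |E m| := by
      intro m
      simp only [hqdef, hEdef, one_div, ← Finset.prod_inv_distrib, Finset.abs_prod]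
    set fseq : ℕ → ℝ := fun j => r j / E (j + 1) with hfseqdef
    set g : ℕ → ℝ := fun j => ∏ t ∈ range (j + 1), q t with hgdef
    have hg0 : ∀ j, 0 ≤ g j := by
      intro j; simp only [hgdef]
      exact Finset.prod_nonneg fun t _ => hq0 t
    have hgE : ∀ j, g j = 1 / |E (j + 1)| := fun j => hEinv (j + 1)
    have habs_f : ∀ j, |fseq j| ≤ ε * g j := by
      intro j
      rw [hgE j]
      simp only [hfseqdef]
      rw [abs_div]
      rw [div_eq_mul_one_div]
      exact mul_le_mul_of_nonneg_right (hr j) (by positivity)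
    have hgsum_partial : ∀ N, ∑ j ∈ range N, g j ≤ T 0 := by
      intro N
      have e : ∑ j ∈ range N, g j = Hf 0 N := by
        simp only [hgdef, hHfdef]
        exact sum_congr rfl fun j _ => prod_congr rfl fun t _ => by rw [Nat.zero_add]
      rw [e]; exact Hle N 0
    have hgsummable : Summable g := summable_of_sum_range_le hg0 hgsum_partial
    have habs_summable : Summable (fun j => |fseq j|) :=
      Summable.of_nonneg_of_le (fun j => abs_nonneg _) habs_f (hgsummable.mul_left ε)
    have hfsummable : Summable fseq := summable_abs_iff.mp habs_summable
    set δ : ℝ := ∑' j, fseq j with hδdef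
    refine ⟨ygen (ξ 0 + h * δ), hysol _, ?_⟩
    have hdk : ∀ k, ξ k - ygen (ξ 0 + h * δ) k
        = E k * (-(h * δ) + h * ∑ j ∈ range k, fseq j) := by
      intro k
      induction k with
      | zero =>
        rw [hy0]
        simp only [hEdef, range_zero, prod_empty, sum_empty]
        ring
      | succ k ih =>
        have e2 : E (k + 1) * fseq k = r k := by
          simp only [hfseqdef]
          rw [mul_div_assoc']
          exact mul_div_cancel_left₀ _ (hE (k + 1))
        rw [hdrec _ k, ih, sum_range_succ]
        calc p k * (E k * (-(h * δ) + h * ∑ j ∈ range k, fseq j)) + h * r k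
            = E (k + 1) * (-(h * δ) + h * ∑ j ∈ range k, fseq j)
              + h * (E (k + 1) * fseq k) := by rw [e2, hEsucc k]; ring
          _ = E (k + 1) * (-(h * δ) + h * ((∑ j ∈ range k, fseq j) + fseq k)) := by ring
    have htail : ∀ k, -(h * δ) + h * ∑ j ∈ range k, fseq j = -(h * ∑' i, fseq (i + k)) := by
      intro k
      have e := hfsummable.sum_add_tsum_nat_add k
      rw [hδdef, ← e]
      ring
    have hbd : ∀ k, |ξ k - ygen (ξ 0 + h * δ) k| ≤ h * ε * T k := by
      intro k
      rw [hdk k, htail k]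
      have hsumshift : Summable fun i => |fseq (i + k)| :=
        (summable_nat_add_iff k).mpr habs_summable
      have htsum_le : ∑' i, |fseq (i + k)| ≤ ε * T k / |E k| := by
        refine hsumshift.tsum_le_of_sum_range_le ?_
        intro N
        have e1 : ∀ i, g (i + k) = (1 / |E k|) * ∏ t ∈ range (i + 1), q (k + t) := by
          intro i
          simp only [hgdef]
          rw [show i + k + 1 = k + (i + 1) from by omega, prod_range_add, hEinv k]
        calc ∑ i ∈ range N, |fseq (i + k)|
            ≤ ∑ i ∈ range N, ε * g (i + k) := sum_le_sum fun i _ => habs_f (i + k)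
          _ = ε * ((1 / |E k|) * Hf k N) := by
              rw [← mul_sum]
              congr 1
              simp only [hHfdef]
              rw [mul_sum]
              exact sum_congr rfl fun i _ => e1 i
          _ ≤ ε * ((1 / |E k|) * T k) := by
              have := Hle N k
              have h1 : (0:ℝ) ≤ 1 / |E k| := by positivity
              exact mul_le_mul_of_nonneg_left (mul_le_mul_of_nonneg_left this h1) hε
          _ = ε * T k / |E k| := by ring
      have habs_tsum : |∑' i, fseq (i + k)| ≤ ∑' i, |fseq (i + k)| := by
        have := norm_tsum_le_tsum_norm (f := fun i => fseq (i + k)) (by simpa using hsumshift)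
        simpa [Real.norm_eq_abs] using this
      calc |E k * -(h * ∑' i, fseq (i + k))|
          = |E k| * (h * |∑' i, fseq (i + k)|) := by
            rw [abs_mul, abs_neg, abs_mul, abs_of_pos hh]
        _ ≤ |E k| * (h * (ε * T k / |E k|)) := by
            have h2 := habs_tsum.trans htsum_le
            have h3 : (0:ℝ) ≤ |E k| := abs_nonneg _
            exact mul_le_mul_of_nonneg_left (mul_le_mul_of_nonneg_left h2 hh.le) h3
        _ = h * ε * T k := by
            field_simp [ne_of_gt (hEpos k)]
    intro k
    refine (hbd k).trans (le_of_eq ?_)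
    rw [abs_of_neg (by linarith : 1 - |P| < 0)]
    simp only [hTdef]
    ring

private lemma Ssum_le_sup (h : ℝ) (n : ℕ) (hn : 1 ≤ n) (a : ℕ → ℝ) (m : ℕ) :
    Ssum h n a m ≤ ⨆ j : Fin n, Ssum h n a (j : ℕ) := by
  have : Nonempty (Fin n) := ⟨⟨0, by omega⟩⟩
  calc Ssum h n a m = Ssum h n a (m % n) := (Ssum_mod h n a m).symm
    _ ≤ ⨆ j : Fin n, Ssum h n a (j : ℕ) :=
        le_ciSup (f := fun j : Fin n => Ssum h n a (j : ℕ))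
          (Set.Finite.bddAbove (Set.finite_range _)) (⟨m % n, Nat.mod_lt _ (by omega)⟩ : Fin n)

private lemma K0_nonneg (h : ℝ) (hh : 0 < h) (n : ℕ) (hn : 1 ≤ n) (a : ℕ → ℝ) :
    0 ≤ K0 h n a := by
  have h1 : 0 ≤ h * |eExp h n a| / abs (1 - |eExp h n a|) := by positivity
  have h2 : (0:ℝ) ≤ ⨆ j : Fin n, Ssum h n a (j : ℕ) :=
    le_trans (Ssum_nonneg h n a 0) (Ssum_le_sup h n hn a 0)
  exact mul_nonneg h1 h2

theorem stmt_3 (h : ℝ) (hh : 0 < h) (n : ℕ) (hn : 1 ≤ n) (c : ℕ → ℝ)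
    (hc : ∀ j, j < n → c j ≠ 1 / h ∧ c j ≠ -1 / h)
    (he0 : 0 < |eExp h n c|) (he1 : |eExp h n c| ≠ 1)
    (hne0 : 0 < |eExp h n (fun j => -c j)|) (hne1 : |eExp h n (fun j => -c j)| ≠ 1) :
    ∀ ε : ℝ, 0 < ε → ∀ ξ : ℕ → ℝ,
      (∀ k, |hDiff h (hDiff h ξ) k +
        (hDiff h (cyc n c) k - cyc n c k * cyc n c (k + 1)) * ξ k| ≤ ε) →
      ∃ y : ℕ → ℝ,
        (∀ k, hDiff h (hDiff h y) k +
          (hDiff h (cyc n c) k - cyc n c k * cyc n c (k + 1)) * y k = 0) ∧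
        ∀ k, |ξ k - y k| ≤ K0 h n c * K0 h n (fun j => -c j) * ε := by
  intro ε hε ξ hξ
  have hne : h ≠ 0 := ne_of_gt hh
  have hcp : ∀ j, j < n → 1 + h * c j ≠ 0 := by
    intro j hj heq
    apply (hc j hj).2
    field_simp
    linarith
  have hcm : ∀ j, j < n → 1 + h * (-c j) ≠ 0 := by
    intro j hj heq
    apply (hc j hj).1
    field_simp
    linarith
  set b : ℕ → ℝ := fun j => c ((j + 1) % n) with hbdef
  have hb1 : ∀ j, j < n → 1 + h * b j ≠ 0 := by
    intro j hj
    exact hcp _ (Nat.mod_lt _ (by omega))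
  have heb : eExp h n b = eExp h n c := by
    have e1 : eExp h n b = ∏ i ∈ Finset.range n, (1 + h * c ((1 + i) % n)) := by
      unfold eExp
      exact Finset.prod_congr rfl fun i _ => by
        simp only [hbdef]
        rw [show i + 1 = 1 + i from by omega]
    rw [e1, prod_rot n hn (fun i => 1 + h * c i) hcp 1]
    rfl
  have hSb : ∀ k, Ssum h n b k = Ssum h n c (k + 1) := by
    intro k
    unfold Ssum
    refine Finset.sum_congr rfl fun j _ => Finset.prod_congr rfl fun i _ => ?_
    simp only [hbdef]
    rw [Nat.mod_add_mod, show k + i + 1 = k + 1 + i from by omega]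
  -- u = first-order combination
  set u : ℕ → ℝ := fun k => hDiff h ξ k + cyc n c k * ξ k with hudef
  have hu : ∀ k, |hDiff h u k - cyc n b k * u k - (fun _ : ℕ => (0:ℝ)) k| ≤ ε := by
    intro k
    have e : hDiff h u k - cyc n b k * u k - (fun _ : ℕ => (0:ℝ)) k
        = hDiff h (hDiff h ξ) k +
          (hDiff h (cyc n c) k - cyc n c k * cyc n c (k + 1)) * ξ k := by
      simp only [hudef, hbdef, hDiff, cyc, Nat.mod_add_mod]
      field_simp
      ring
    rw [e]; exact hξ k
  obtain ⟨u₀, hu₀sol, hu₀bd⟩ := FO h hh n hn b hb1 (by rw [heb]; exact he0)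
    (by rw [heb]; exact he1) (fun _ => 0) ε hε.le u hu
  -- bound |u - u₀| by K0 c * ε
  have hC : (0:ℝ) ≤ h * |eExp h n c| / abs (1 - |eExp h n c|) := by positivity
  have hK1 : ∀ k, |u k - u₀ k| ≤ K0 h n c * ε := by
    intro k
    refine (hu₀bd k).trans ?_
    rw [heb, hSb k]
    unfold K0
    have h1 := Ssum_le_sup h n hn c (k + 1)
    have h2 : h * |eExp h n c| / abs (1 - |eExp h n c|) * Ssum h n c (k + 1)
        ≤ h * |eExp h n c| / abs (1 - |eExp h n c|) * ⨆ j : Fin n, Ssum h n c (j : ℕ) :=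
      mul_le_mul_of_nonneg_left h1 hC
    exact mul_le_mul_of_nonneg_right h2 hε.le
  -- second application
  have hξ2 : ∀ k, |hDiff h ξ k - cyc n (fun j => -c j) k * ξ k - u₀ k| ≤ K0 h n c * ε := by
    intro k
    have e : hDiff h ξ k - cyc n (fun j => -c j) k * ξ k - u₀ k = u k - u₀ k := by
      simp only [hudef, cyc]
      ring
    rw [e]; exact hK1 k
  have hK0c : 0 ≤ K0 h n c := K0_nonneg h hh n hn c
  obtain ⟨y, hysol, hybd⟩ := FO h hh n hn (fun j => -c j) hcm hne0 hne1 u₀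
    (K0 h n c * ε) (mul_nonneg hK0c hε.le) ξ hξ2
  refine ⟨y, ?_, ?_⟩
  · intro k
    have A1' := hysol k
    have A2' := hysol (k + 1)
    have B1' := hu₀sol k
    simp only [cyc, hDiff] at A1' A2' B1' ⊢
    simp only [hbdef, Nat.mod_add_mod] at B1'
    have e1 : y (k + 1) = y k + h * (u₀ k - c (k % n) * y k) := by
      have := (div_eq_iff hne).1 (by linarith [A1'] : (y (k + 1) - y k) / h
        = u₀ k - c (k % n) * y k)
      linarith
    have e3 : u₀ (k + 1) = u₀ k + h * (c ((k + 1) % n) * u₀ k) := by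
      have := (div_eq_iff hne).1 (by linarith [B1'] : (u₀ (k + 1) - u₀ k) / h
        = c ((k + 1) % n) * u₀ k)
      linarith
    have e2 : y (k + 1 + 1) = y (k + 1) + h * (u₀ (k + 1) - c ((k + 1) % n) * y (k + 1)) := by
      have := (div_eq_iff hne).1 (by linarith [A2'] : (y (k + 1 + 1) - y (k + 1)) / h
        = u₀ (k + 1) - c ((k + 1) % n) * y (k + 1))
      linarith
    rw [e2, e3, e1]
    field_simp
    ring
  · intro k
    refine (hybd k).trans ?_
    have hC2 : (0:ℝ) ≤ h * |eExp h n (fun j => -c j)| / abs (1 - |eExp h n (fun j => -c j)|) := by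
      positivity
    have h1 := Ssum_le_sup h n hn (fun j => -c j) k
    have h2 : h * |eExp h n (fun j => -c j)| / abs (1 - |eExp h n (fun j => -c j)|) *
          Ssum h n (fun j => -c j) k
        ≤ K0 h n (fun j => -c j) :=
      mul_le_mul_of_nonneg_left h1 hC2
    calc h * |eExp h n (fun j => -c j)| / abs (1 - |eExp h n (fun j => -c j)|) *
          Ssum h n (fun j => -c j) k * (K0 h n c * ε)
        ≤ K0 h n (fun j => -c j) * (K0 h n c * ε) :=
          mul_le_mul_of_nonneg_right h2 (mul_nonneg hK0c hε.le)
      _ = K0 h n c * K0 h n (fun j => -c j) * ε := by ring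
end
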